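/- Let f be a type function and S ∈ 𝓟_f^0. Then at least one of S^↓ and S^↑ is a chain. Moreover, if S^↓ is a chain, then the rank ρ_f(S) of S in 𝓟_f equals the length of the chain S^↓ (i.e. |S^↓| − 1). -/

import Mathlib

open Classical

namespace HOT

/-- Binary strings of length `n`, identified with `{0,1}^n`. -/
abbrev Str (n : ℕ) := Fin n → Bool

/-- The all-zeros string `θ`. -/
def theta (n : ℕ) : Str n := fun _ => false

/-- `𝓕_n`: boolean functions on `{0,1}^n` with `f(θ) = 1`. -/
def Fcal (n : ℕ) : Set (Str n → Bool) := {f | f (theta n) = true}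

/-- The complement `f* = 1 - f + p_n`. -/
noncomputable def star {n : ℕ} (f : Str n → Bool) : Str n → Bool :=
  fun s => if s = theta n then true else !(f s)

/-- First block `s¹` of a string `s ∈ {0,1}^{m+n}`. -/
def fstStr {m n : ℕ} (s : Str (m + n)) : Str m := fun i => s (Fin.castAdd n i)

/-- Second block `s²` of a string `s ∈ {0,1}^{m+n}`. -/
def sndStr {m n : ℕ} (s : Str (m + n)) : Str n := fun j => s (Fin.natAdd m j)

/-- Tensor product `(f ⊗ g)(s) = f(s¹) · g(s²)`. -/
noncomputable def tensor {m n : ℕ} (f : Str m → Bool) (g : Str n → Bool) :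
    Str (m + n) → Bool :=
  fun s => f (fstStr s) && g (sndStr s)

/-- `f ⅋ g := (f* ⊗ g*)*`. -/
noncomputable def parr {m n : ℕ} (f : Str m → Bool) (g : Str n → Bool) :
    Str (m + n) → Bool :=
  star (tensor (star f) (star g))

/-- The causal product `f ◁ g` (`f` on the first `m` bits, `g` on the last `n` bits):
`(f ◁ g)(s) = f(s¹)` if `s¹ ≠ θ_m`, else `g(s²)`. -/
noncomputable def causalL {m n : ℕ} (f : Str m → Bool) (g : Str n → Bool) :
    Str (m + n) → Bool :=
  fun s => if fstStr s = theta m then g (sndStr s) else f (fstStr s)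

/-- The causal product `g ◁ f` (`f` on the first `m` bits, `g` on the last `n` bits):
`(g ◁ f)(s) = g(s²)` if `s² ≠ θ_n`, else `f(s¹)`. -/
noncomputable def causalR {m n : ℕ} (f : Str m → Bool) (g : Str n → Bool) :
    Str (m + n) → Bool :=
  fun s => if sndStr s = theta n then f (fstStr s) else g (sndStr s)

/-- `p_T(s) = 1` iff `s_i = 0` for all `i ∈ T`. -/
noncomputable def pSet {n : ℕ} (T : Set (Fin n)) : Str n → Bool :=
  fun s => decide (∀ i ∈ T, s i = false)

/-- The string `e^i` with `1` exactly in position `i`. -/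
def eStr {n : ℕ} (i : Fin n) : Str n := fun j => decide (j = i)

/-- The string `e^{i,j}` with `1` exactly in positions `i` and `j`. -/
def e2Str {n : ℕ} (i j : Fin n) : Str n := fun l => decide (l = i ∨ l = j)

/-- Input indices `I_f = {i : f(e^i) = 0}`. -/
def Iset {n : ℕ} (f : Str n → Bool) : Set (Fin n) := {i | f (eStr i) = false}

/-- Output indices `O_f = {j : f(e^j) = 1}`. -/
def Oset {n : ℕ} (f : Str n → Bool) : Set (Fin n) := {j | f (eStr j) = true}

/-- `f` is a subtype if `p_{I_f} ≤ f ≤ (p_{O_f})*` pointwise. -/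
def IsSubtype {n : ℕ} (f : Str n → Bool) : Prop :=
  pSet (Iset f) ≤ f ∧ f ≤ star (pSet (Oset f))

/-- The partial order `≤_O`: `s ≤_O t` iff `s_i ≤ t_i` for `i ∈ O` and `s_i ≥ t_i` for
`i ∉ O`. -/
def leO {n : ℕ} (O : Set (Fin n)) (s t : Str n) : Prop :=
  ∀ i, (i ∈ O → s i ≤ t i) ∧ (i ∉ O → t i ≤ s i)

/-- `f` is monotone (with respect to `≤_{O_f}`). -/
def MonotoneF {n : ℕ} (f : Str n → Bool) : Prop :=
  ∀ s t, leO (Oset f) s t → f s ≤ f t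

/-- The action of a permutation on strings: `σ(s)_i = s_{σ⁻¹(i)}`. -/
def permAct {n : ℕ} (σ : Equiv.Perm (Fin n)) (s : Str n) : Str n := fun i => s (σ⁻¹ i)

/-- `(f ∘ σ)(s) = f(σ(s))`. -/
def permComp {n : ℕ} (f : Str n → Bool) (σ : Equiv.Perm (Fin n)) : Str n → Bool :=
  fun s => f (permAct σ s)

/-- The inductively defined family `𝓣_n` of type functions. -/
inductive IsType : (n : ℕ) → (Str n → Bool) → Prop
  | one : IsType 1 (fun _ => true)
  | dual {n : ℕ} {f : Str n → Bool} : IsType n f → IsType n (star f)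
  | perm {n : ℕ} {f : Str n → Bool} (σ : Equiv.Perm (Fin n)) :
      IsType n f → IsType n (permComp f σ)
  | tens {m n : ℕ} {f : Str m → Bool} {g : Str n → Bool} :
      IsType m f → IsType n g → IsType (m + n) (tensor f g)

/-- Interpretation of a bit as an integer. -/
def toZ (b : Bool) : ℤ := (b.toNat : ℤ)

/-- `f` is a chain type: `f = Σ_{i=0}^N (-1)^i p_{S_i}` for a strictly increasing chain
`S_0 ⊊ ⋯ ⊊ S_N ⊆ [n]` with `N` even. -/
def IsChainType {n : ℕ} (f : Str n → Bool) : Prop :=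
  ∃ N : ℕ, Even N ∧ ∃ S : Fin (N + 1) → Set (Fin n), StrictMono S ∧
    ∀ s : Str n, toZ (f s) = ∑ i : Fin (N + 1), (-1 : ℤ) ^ (i : ℕ) * toZ (pSet (S i) s)

/-- The Möbius transform `f̂_T`. -/
noncomputable def mobius {n : ℕ} (f : Str n → Bool) (T : Set (Fin n)) : ℤ :=
  ∑ s : Str n, if ∀ j, j ∉ T → s j = true then
    (-1 : ℤ) ^ (∑ j : Fin n, if j ∈ T then (s j).toNat else 0) * toZ (f s)
  else 0

/-- The structure poset `𝓟_f = {T ⊆ [n] : f̂_T ≠ 0}`, ordered by inclusion. -/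
noncomputable def structPoset {n : ℕ} (f : Str n → Bool) : Set (Set (Fin n)) :=
  {T | mobius f T ≠ 0}

/-- The label set `L_T = T ∖ ⋃ {S ∈ 𝓟_f : S ⊊ T}`. -/
noncomputable def labels {n : ℕ} (f : Str n → Bool) (T : Set (Fin n)) : Set (Fin n) :=
  T \ ⋃₀ {S | S ∈ structPoset f ∧ S ⊂ T}

/-- The reduced structure poset `𝓟_f^0`: `∅` (if `∅ ∈ 𝓟_f`) together with all
`T ∈ 𝓟_f` with `L_T ≠ ∅`. -/
noncomputable def reducedPoset {n : ℕ} (f : Str n → Bool) : Set (Set (Fin n)) :=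
  {T | T ∈ structPoset f ∧ (T = ∅ ∨ labels f T ≠ ∅)}

/-- The rank `ρ_f(T)`: the length of a longest chain in `𝓟_f` with top element `T`
(this is the length of any maximal such chain in the graded poset `𝓟_f`). -/
noncomputable def rank {n : ℕ} (f : Str n → Bool) (T : Set (Fin n)) : ℕ :=
  sSup {k | ∃ c : Fin (k + 1) → Set (Fin n), StrictMono c ∧
    (∀ i, c i ∈ structPoset f) ∧ c (Fin.last k) = T}

/-- The rank `r(f)` of the whole poset `𝓟_f`: the common length of its maximal chains. -/
noncomputable def rk {n : ℕ} (f : Str n → Bool) : ℕ :=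
  sSup {k | ∃ c : Fin (k + 1) → Set (Fin n), StrictMono c ∧ ∀ i, c i ∈ structPoset f}

/-- `𝕋_i^f = {T ∈ 𝓟_f : i ∈ L_T}`. -/
noncomputable def Tset {n : ℕ} (f : Str n → Bool) (i : Fin n) : Set (Set (Fin n)) :=
  {T | T ∈ structPoset f ∧ i ∈ labels f T}

/-- The rank `r_f(i)` of an index: the common rank of elements of `𝕋_i^f`, or `r(f)+1`
if `𝕋_i^f = ∅` (a free output). -/
noncomputable def idxRank {n : ℕ} (f : Str n → Bool) (i : Fin n) : ℕ :=
  if (Tset f i).Nonempty then sSup (rank f '' Tset f i) else rk f + 1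

/-- `X` is the greatest lower bound of `S` and `T` in the poset `(P, ⊆)`. -/
def IsGLBIn {n : ℕ} (P : Set (Set (Fin n))) (S T X : Set (Fin n)) : Prop :=
  X ∈ P ∧ X ⊆ S ∧ X ⊆ T ∧ ∀ Y ∈ P, Y ⊆ S → Y ⊆ T → Y ⊆ X

/-- `X` is the least upper bound of `S` and `T` in the poset `(P, ⊆)`. -/
def IsLUBIn {n : ℕ} (P : Set (Set (Fin n))) (S T X : Set (Fin n)) : Prop :=
  X ∈ P ∧ S ⊆ X ∧ T ⊆ X ∧ ∀ Y ∈ P, S ⊆ Y → T ⊆ Y → X ⊆ Y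

/-- `S^↓`: the downset generated by `S` in `𝓟_f^0`. -/
noncomputable def downSet {n : ℕ} (f : Str n → Bool) (S : Set (Fin n)) :
    Set (Set (Fin n)) :=
  {X | X ∈ reducedPoset f ∧ X ⊆ S}

/-- `S^↑`: the upset generated by `S` in `𝓟_f^0`. -/
noncomputable def upSet {n : ℕ} (f : Str n → Bool) (S : Set (Fin n)) :
    Set (Set (Fin n)) :=
  {X | X ∈ reducedPoset f ∧ S ⊆ X}

/-- The pair rank `r_f(i,j)`: `max{ρ_f(S ∧ T) : S ∈ 𝕋_i^f, T ∈ 𝕋_j^f, S ∧ T exists in 𝓟_f}`;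
`-1` if this set is empty, unless `i` or `j` is a free output, in which case it is
`min{r_f(i), r_f(j)}`. -/
noncomputable def pairRank {n : ℕ} (f : Str n → Bool) (i j : Fin n) : ℤ :=
  if _h : ∃ r : ℤ, ∃ S ∈ Tset f i, ∃ T ∈ Tset f j, ∃ X, IsGLBIn (structPoset f) S T X ∧
      r = (rank f X : ℤ) then
    sSup {r : ℤ | ∃ S ∈ Tset f i, ∃ T ∈ Tset f j, ∃ X, IsGLBIn (structPoset f) S T X ∧
      r = (rank f X : ℤ)}
  else if Tset f i = ∅ ∨ Tset f j = ∅ then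
    min (idxRank f i : ℤ) (idxRank f j : ℤ)
  else -1

/-- Membership in the sublattice generated by a set `S`. -/
inductive InLatGen {α : Type*} [Lattice α] (S : Set α) : α → Prop
  | base {a : α} : a ∈ S → InLatGen S a
  | sup {a b : α} : InLatGen S a → InLatGen S b → InLatGen S (a ⊔ b)
  | inf {a b : α} : InLatGen S a → InLatGen S b → InLatGen S (a ⊓ b)

/-- For `s ≰_O θ`, `f_s` is the function with support `U_s ∪ U_θ` (w.r.t. `≤_O`). -/
noncomputable def fStr {n : ℕ} (O : Set (Fin n)) (s : Str n) : Str n → Bool :=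
  fun t => decide (leO O s t ∨ leO O (theta n) t)

/-- A string `s ∉ D_θ ∪ U_θ` is basic (for `≤_O`) if `s_j = 1` for exactly one `j ∈ O`
and `s_i = 0` for at most one `i ∈ I = Oᶜ`. -/
def IsBasic {n : ℕ} (O : Set (Fin n)) (s : Str n) : Prop :=
  ¬ leO O s (theta n) ∧ ¬ leO O (theta n) s ∧
  (∃! j, j ∈ O ∧ s j = true) ∧
  (∀ i i', i ∈ Oᶜ → i' ∈ Oᶜ → s i = false → s i' = false → i = i')

/-!
The notions involved depend only on the family `𝓟_f` inside the complete lattice of subsets of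
`[n]`, and `𝓟_f^0` can be read order-theoretically: `L_T ≠ ∅` means that `T` is not below the
join of the members of `𝓟_f` strictly below it.

The rank formula holds for every family `P` in a finite complete lattice, by induction on `T`.
If `T` is not minimal and the reduced elements below `T` form a chain, let `M` be the largest one
strictly below `T`. Every member of `P` lies below the join of the reduced elements below it, so
`M` dominates all of `P` strictly below `T`; hence `ρ(T) = ρ(M) + 1` and `T↓ = M↓ ∪ {T}`.

That `S↓` or `S↑` is a chain is proved by induction on type functions. Dualising changes `𝓟_f`
only at `∅` and `[n]` (elsewhere `f̂*_T = -f̂_T`), which are comparable with everything; a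
permutation acts by a lattice automorphism; and `𝓟_{f ⊗ g}` is `𝓟_f × 𝓟_g` up to a lattice
isomorphism. A reduced pair `(a, b)` of a product has reduced coordinates, one of them minimal,
say `a`; then `(a, b)↓ ⊆ {a} × b↓`, and `(a, b)↑ ⊆ {a} × b↑` unless `b` is minimal too, in which
case `b↓ = {b}`.
-/

open Set

section Mobius

variable {m n : ℕ}

noncomputable def mobiusWeight (T : Set (Fin n)) (s : Str n) : ℤ :=
  ∏ j, if j ∈ T then (-1) ^ (s j).toNat else ((s j).toNat : ℤ)

lemma mobius_eq_sum_mobiusWeight (f : Str n → Bool) (T : Set (Fin n)) :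
    mobius f T = ∑ s, mobiusWeight T s * toZ (f s) := by
  refine Finset.sum_congr rfl fun s _ => ?_
  split_ifs with h
  · rw [mobiusWeight, ← Finset.prod_pow_eq_pow_sum]
    congr 1
    refine Finset.prod_congr rfl fun j _ => ?_
    split_ifs with hj
    · rfl
    · simp [h j hj]
  · obtain ⟨j, hj, hsj⟩ := not_forall₂.mp h
    rw [mobiusWeight, Finset.prod_eq_zero (Finset.mem_univ j) (by simp [hj, hsj]), zero_mul]

lemma sum_mobiusWeight {T : Set (Fin n)} (hT : T.Nonempty) : ∑ s, mobiusWeight T s = 0 := by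
  obtain ⟨j, hj⟩ := hT
  simp only [mobiusWeight]
  rw [← Fintype.prod_sum fun j (b : Bool) => if j ∈ T then (-1) ^ b.toNat else (b.toNat : ℤ)]
  exact Finset.prod_eq_zero (Finset.mem_univ j) (by simp [hj])

lemma mobiusWeight_theta {T : Set (Fin n)} (hT : T ≠ univ) : mobiusWeight T (theta n) = 0 := by
  obtain ⟨j, hj⟩ := (ne_univ_iff_exists_notMem T).mp hT
  exact Finset.prod_eq_zero (Finset.mem_univ j) (by simp [hj, theta])

lemma mobius_star (f : Str n → Bool) {T : Set (Fin n)} (h₀ : T.Nonempty) (h₁ : T ≠ univ) :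
    mobius (star f) T = -mobius f T := by
  have key (s : Str n) :
      mobiusWeight T s * toZ (star f s) = mobiusWeight T s - mobiusWeight T s * toZ (f s) := by
    by_cases hs : s = theta n
    · simp [hs, mobiusWeight_theta h₁]
    · simp only [star, if_neg hs]
      cases f s <;> simp [toZ]
  simp only [mobius_eq_sum_mobiusWeight, key, Finset.sum_sub_distrib, sum_mobiusWeight h₀,
    zero_sub]

lemma mobius_permComp (f : Str n → Bool) (σ : Equiv.Perm (Fin n)) (T : Set (Fin n)) :
    mobius (permComp f σ) T = mobius f (σ '' T) := by
  simp only [mobius_eq_sum_mobiusWeight]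
  refine Fintype.sum_equiv (σ.arrowCongr (Equiv.refl Bool)) _ _ fun s => ?_
  congr 1
  rw [mobiusWeight, mobiusWeight, ← Equiv.prod_comp σ.symm]
  simp

lemma toZ_and (a b : Bool) : toZ (a && b) = toZ a * toZ b := by
  cases a <;> cases b <;> rfl

lemma mobius_tensor (f : Str m → Bool) (g : Str n → Bool) (T : Set (Fin (m + n))) :
    mobius (tensor f g) T =
      mobius f (Fin.castAdd n ⁻¹' T) * mobius g (Fin.natAdd m ⁻¹' T) := by
  simp only [mobius_eq_sum_mobiusWeight, Finset.sum_mul_sum, ← Fintype.sum_prod_type']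
  refine Fintype.sum_equiv (Fin.appendEquiv m n).symm _ _ fun s => ?_
  simp [mobiusWeight, Fin.prod_univ_add, tensor, toZ_and, mul_mul_mul_comm]
  rfl

end Mobius

section Height

variable {α : Type*} [PartialOrder α] {P : Set α} {M T : α} {k : ℕ} {c : Fin (k + 1) → α}

def chainLengths (P : Set α) (T : α) : Set ℕ :=
  {k | ∃ c : Fin (k + 1) → α, StrictMono c ∧ (∀ i, c i ∈ P) ∧ c (Fin.last k) = T}

-- `rank f T` is `heightIn (structPoset f) T` by definition.
noncomputable def heightIn (P : Set α) (T : α) : ℕ :=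
  sSup (chainLengths P T)

lemma strictMono_snoc (hc : StrictMono c) (hT : c (Fin.last k) < T) :
    StrictMono (Fin.snoc c T : Fin (k + 2) → α) := by
  refine Fin.strictMono_iff_lt_succ.2 fun i => ?_
  cases i using Fin.lastCases with
  | last => simpa using hT
  | cast i =>
    rw [Fin.succ_castSucc, Fin.snoc_castSucc, Fin.snoc_castSucc]
    exact hc Fin.castSucc_lt_succ

lemma zero_mem_chainLengths (hT : T ∈ P) : 0 ∈ chainLengths P T :=
  ⟨fun _ => T, Subsingleton.strictMono (α := Fin 1) _, fun _ => hT, rfl⟩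

lemma bddAbove_chainLengths [Finite α] (P : Set α) (T : α) : BddAbove (chainLengths P T) := by
  refine ⟨Nat.card α, ?_⟩
  rintro j ⟨d, hd, -, -⟩
  have := Nat.card_le_card_of_injective d hd.injective
  simp only [Nat.card_eq_fintype_card, Fintype.card_fin] at this
  omega

lemma le_heightIn [Finite α] (hc : StrictMono c) (hP : ∀ i, c i ∈ P)
    (hT : c (Fin.last k) = T) : k ≤ heightIn P T :=
  le_csSup (bddAbove_chainLengths P T) ⟨c, hc, hP, hT⟩

lemma heightIn_le {m : ℕ} (hT : T ∈ P)
    (h : ∀ k (c : Fin (k + 1) → α), StrictMono c → (∀ i, c i ∈ P) → c (Fin.last k) = T → k ≤ m) :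
    heightIn P T ≤ m :=
  csSup_le ⟨0, zero_mem_chainLengths hT⟩ fun k ⟨c, hc, hP, hlast⟩ => h k c hc hP hlast

lemma exists_strictMono_heightIn [Finite α] (hT : T ∈ P) :
    ∃ c : Fin (heightIn P T + 1) → α,
      StrictMono c ∧ (∀ i, c i ∈ P) ∧ c (Fin.last (heightIn P T)) = T :=
  Nat.sSup_mem ⟨0, zero_mem_chainLengths hT⟩ (bddAbove_chainLengths P T)

lemma succ_le_heightIn [Finite α] (hc : StrictMono c) (hP : ∀ i, c i ∈ P) (hT : T ∈ P)
    (hlt : c (Fin.last k) < T) : k + 1 ≤ heightIn P T :=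
  le_heightIn (strictMono_snoc hc hlt) (Fin.lastCases (by simpa) (by simpa)) (by simp)

lemma le_heightIn_of_le [Finite α] (hc : StrictMono c) (hP : ∀ i, c i ∈ P) (hM : M ∈ P)
    (hle : c (Fin.last k) ≤ M) : k ≤ heightIn P M := by
  rcases hle.eq_or_lt with h | h
  · exact le_heightIn hc hP h
  · exact (succ_le_heightIn hc hP hM h).trans' (Nat.le_succ k)

lemma heightIn_eq_zero_of_minimal (hT : Minimal (· ∈ P) T) : heightIn P T = 0 := by
  refine Nat.le_zero.1 (heightIn_le hT.1 fun k c hc hP hlast => ?_)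
  by_contra hk
  exact hT.not_lt (hP 0) (hlast ▸ hc (Fin.pos_iff_ne_zero.2 (by simpa [Fin.ext_iff] using hk)))

lemma heightIn_eq_succ [Finite α] (hT : T ∈ P) (hM : M ∈ P) (hMT : M < T)
    (hle : ∀ X ∈ P, X < T → X ≤ M) : heightIn P T = heightIn P M + 1 := by
  refine le_antisymm (heightIn_le hT fun k c hc hP hlast => ?_) ?_
  · cases k with
    | zero => omega
    | succ k =>
      have hlt : c (Fin.last k).castSucc < T := hlast ▸ hc (Fin.castSucc_lt_last _)
      have := le_heightIn_of_le (hc.comp Fin.strictMono_castSucc) (fun i => hP _) hM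
        (hle _ (hP _) hlt)
      omega
  · obtain ⟨c, hc, hP, hlast⟩ := exists_strictMono_heightIn hM
    exact succ_le_heightIn hc hP hT (by rwa [hlast])

end Height

section Reduced

variable {α : Type*} [CompleteLattice α] {P : Set α} {T : α}

def reduced (P : Set α) : Set α :=
  {T | T ∈ P ∧ (T = ⊥ ∨ ¬ T ≤ sSup {S | S ∈ P ∧ S < T})}

lemma reduced_subset : reduced P ⊆ P := fun _ h => h.1

lemma mem_reduced_of_minimal (hT : Minimal (· ∈ P) T) : T ∈ reduced P := by
  refine ⟨hT.1, or_iff_not_imp_left.2 fun hne hle => hne (le_bot_iff.1 (hle.trans ?_))⟩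
  exact sSup_le fun S ⟨hS, hST⟩ => absurd hST (hT.not_lt hS)

lemma reduced_inter_Iic_of_minimal (hT : Minimal (· ∈ P) T) : reduced P ∩ Iic T = {T} :=
  Subset.antisymm (fun _ hY => hT.eq_of_le hY.1.1 hY.2) <|
    singleton_subset_iff.2 ⟨mem_reduced_of_minimal hT, le_rfl⟩

lemma le_sSup_reduced_inter_Iic [Finite α] (hT : T ∈ P) : T ≤ sSup (reduced P ∩ Iic T) := by
  induction T using WellFoundedLT.induction with
  | ind T ih =>
    by_cases hr : T ∈ reduced P
    · exact le_sSup ⟨hr, le_rfl⟩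
    have hcov : T ≤ sSup {S | S ∈ P ∧ S < T} := by
      simp only [reduced, mem_ofPred_eq, not_and, not_or, not_not] at hr
      exact (hr hT).2
    refine hcov.trans (sSup_le fun S ⟨hS, hST⟩ => (ih S hST hS).trans (sSup_le_sSup ?_))
    exact inter_subset_inter_right _ (Iic_subset_Iic.2 hST.le)

lemma exists_greatest_reduced_lt [Finite α] (hT : T ∈ P) (hmin : ¬ Minimal (· ∈ P) T)
    (hc : IsChain (· ≤ ·) (reduced P ∩ Iio T)) :
    ∃ M ∈ reduced P, M < T ∧ ∀ X ∈ P, X < T → X ≤ M := by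
  obtain ⟨X, hX, hXT, hTX⟩ := (not_minimal_iff hT).1 hmin
  obtain ⟨M₀, hM₀X, hM₀⟩ := (toFinite P).exists_le_minimal hX
  obtain ⟨M, hM⟩ := (toFinite (reduced P ∩ Iio T)).exists_maximal
    ⟨M₀, mem_reduced_of_minimal hM₀, hM₀X.trans_lt (lt_of_le_not_ge hXT hTX)⟩
  have hgreatest : ∀ Y ∈ reduced P ∩ Iio T, Y ≤ M := fun Y hY =>
    (hc.total hY hM.1).elim id fun h => hM.2 hY h
  refine ⟨M, hM.1.1, hM.1.2, fun X hX hXT => (le_sSup_reduced_inter_Iic hX).trans ?_⟩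
  exact sSup_le fun Y hY => hgreatest Y ⟨hY.1, hY.2.trans_lt hXT⟩

theorem heightIn_eq_ncard_sub_one [Finite α] (hT : T ∈ P)
    (hc : IsChain (· ≤ ·) (reduced P ∩ Iic T)) :
    heightIn P T = (reduced P ∩ Iic T).ncard - 1 := by
  induction T using WellFoundedLT.induction with
  | ind T ih =>
    by_cases hmin : Minimal (· ∈ P) T
    · rw [heightIn_eq_zero_of_minimal hmin, reduced_inter_Iic_of_minimal hmin, ncard_singleton]
    obtain ⟨M, hM, hMT, hle⟩ := exists_greatest_reduced_lt hT hmin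
      (hc.mono (inter_subset_inter_right _ Iio_subset_Iic_self))
    have hTM : reduced P ∩ Iic T = insert T (reduced P ∩ Iic M) := by
      have hTr : T ∈ reduced P :=
        ⟨hT, Or.inr fun h => hMT.not_ge (h.trans (sSup_le fun S hS => hle S hS.1 hS.2))⟩
      ext Y
      refine ⟨fun ⟨hY, hYT⟩ => ?_, ?_⟩
      · rcases hYT.eq_or_lt with rfl | h
        · exact mem_insert _ _
        · exact mem_insert_of_mem _ ⟨hY, hle Y hY.1 h⟩
      · rintro (rfl | ⟨hY, hYM⟩)
        · exact ⟨hTr, le_rfl⟩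
        · exact ⟨hY, hYM.trans hMT.le⟩
    have hMc : IsChain (· ≤ ·) (reduced P ∩ Iic M) :=
      hc.mono (inter_subset_inter_right _ (Iic_subset_Iic.2 hMT.le))
    have hpos : 0 < (reduced P ∩ Iic M).ncard := (ncard_pos (toFinite _)).2 ⟨M, hM, le_rfl⟩
    rw [heightIn_eq_succ hT hM.1 hMT hle, ih M hMT hM.1 hMc, hTM,
      ncard_insert_of_notMem fun h => hMT.not_ge h.2]
    omega

end Reduced

section ChainDownOrUp

variable {α β : Type*} [CompleteLattice α] [CompleteLattice β] {P Q : Set α}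

def IsChainDownOrUp (P : Set α) (S : α) : Prop :=
  IsChain (· ≤ ·) (reduced P ∩ Iic S) ∨ IsChain (· ≤ ·) (reduced P ∩ Ici S)

lemma reduced_preimage (e : β ≃o α) : reduced (e ⁻¹' P) = e ⁻¹' reduced P := by
  ext T
  have hlower : e '' {S | S ∈ e ⁻¹' P ∧ S < T} = {S | S ∈ P ∧ S < e T} := by
    ext S
    refine ⟨?_, fun ⟨hS, hST⟩ => ⟨e.symm S, ?_⟩⟩
    · rintro ⟨S, ⟨hS, hST⟩, rfl⟩
      exact ⟨hS, e.lt_iff_lt.2 hST⟩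
    · simp [hS, e.symm_apply_lt, hST]
  simp only [reduced, mem_preimage, mem_ofPred_eq, map_eq_bot_iff]
  rw [← hlower, sSup_image, ← e.map_sSup, e.le_iff_le]
  rfl

lemma IsChainDownOrUp.preimage {S : β} (e : β ≃o α) (h : IsChainDownOrUp P (e S)) :
    IsChainDownOrUp (e ⁻¹' P) S := by
  have hIic : reduced (e ⁻¹' P) ∩ Iic S = e ⁻¹' (reduced P ∩ Iic (e S)) := by
    rw [reduced_preimage, preimage_inter, e.preimage_Iic, e.symm_apply_apply]
  have hIci : reduced (e ⁻¹' P) ∩ Ici S = e ⁻¹' (reduced P ∩ Ici (e S)) := by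
    rw [reduced_preimage, preimage_inter, e.preimage_Ici, e.symm_apply_apply]
  rw [IsChainDownOrUp, hIic, hIci]
  exact h.imp (·.preimage_relEmbedding e.toOrderEmbedding)
    (·.preimage_relEmbedding e.toOrderEmbedding)

lemma isChain_of_sdiff_bot_top {s t : Set α} (hst : s \ {⊥, ⊤} ⊆ t)
    (ht : IsChain (· ≤ ·) t) : IsChain (· ≤ ·) s := by
  refine ((ht.insert fun _ _ _ => Or.inr le_top).insert fun _ _ _ => Or.inl bot_le).mono ?_
  simpa [sdiff_subset_iff, insert_union] using hst

lemma reduced_sdiff_bot_top_subset (h : P \ {⊥, ⊤} = Q \ {⊥, ⊤}) :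
    reduced P \ {⊥, ⊤} ⊆ reduced Q := by
  have hmem {X : α} (hX : X ∉ ({⊥, ⊤} : Set α)) : X ∈ P ↔ X ∈ Q := by
    simpa [hX] using congrArg (X ∈ ·) h
  have hlower (T : α) : {S | S ∈ P ∧ S < T} \ {⊥} = {S | S ∈ Q ∧ S < T} \ {⊥} := by
    ext S
    simp only [mem_sdiff, mem_ofPred_eq, mem_singleton_iff, and_congr_left_iff]
    exact fun hS₀ hST => hmem (by simp [hS₀, hST.ne_top])
  rintro T ⟨⟨hTP, hT⟩, hT'⟩
  refine ⟨(hmem hT').1 hTP, ?_⟩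
  rwa [← sSup_sdiff_singleton_bot, ← hlower, sSup_sdiff_singleton_bot]

lemma isChainDownOrUp_of_sdiff_bot_top (h : P \ {⊥, ⊤} = Q \ {⊥, ⊤})
    (hP : ∀ S ∈ reduced P, IsChainDownOrUp P S) : ∀ S ∈ reduced Q, IsChainDownOrUp Q S := by
  intro S hS
  by_cases hS₀ : S = ⊥
  · subst hS₀
    refine Or.inl ((subsingleton_singleton (a := ⊥)).anti ?_).isChain
    exact Iic_bot (α := α) ▸ inter_subset_right
  by_cases hS₁ : S = ⊤
  · subst hS₁
    refine Or.inr ((subsingleton_singleton (a := ⊤)).anti ?_).isChain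
    exact Ici_top (α := α) ▸ inter_subset_right
  have hQP {X : α} (hX : X ∈ reduced Q \ {⊥, ⊤}) : X ∈ reduced P :=
    reduced_sdiff_bot_top_subset h.symm hX
  refine (hP S (hQP ⟨hS, by simp [hS₀, hS₁]⟩)).imp (isChain_of_sdiff_bot_top ?_)
    (isChain_of_sdiff_bot_top ?_)
  · exact fun X ⟨⟨hX, hXS⟩, hX'⟩ => ⟨hQP ⟨hX, hX'⟩, hXS⟩
  · exact fun X ⟨⟨hX, hXS⟩, hX'⟩ => ⟨hQP ⟨hX, hX'⟩, hXS⟩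

end ChainDownOrUp

section Prod

variable {α β : Type*} [CompleteLattice α] [CompleteLattice β] {P : Set α} {Q : Set β}

lemma prodComm_preimage_prod :
    (OrderIso.prodComm : α × β ≃o β × α) ⁻¹' (Q ×ˢ P) = P ×ˢ Q := by
  rw [OrderIso.coe_prodComm, preimage_swap_prod]

lemma fst_mem_reduced {x : α × β} (hx : x ∈ reduced (P ×ˢ Q)) : x.1 ∈ reduced P := by
  obtain ⟨a, b⟩ := x
  obtain ⟨⟨ha, hb⟩, hx⟩ := hx
  refine ⟨ha, or_iff_not_imp_left.2 fun ha₀ hle => ?_⟩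
  obtain ⟨a', ha'⟩ : {S | S ∈ P ∧ S < a}.Nonempty := by
    refine nonempty_iff_ne_empty.2 fun h => ha₀ ?_
    rwa [h, sSup_empty, le_bot_iff] at hle
  have hlower {S : α} (hS : S ∈ {S | S ∈ P ∧ S < a}) :
      (S, b) ∈ {y | y ∈ P ×ˢ Q ∧ y < (a, b)} :=
    ⟨⟨hS.1, hb⟩, Prod.mk_lt_mk_iff_left.2 hS.2⟩
  refine hx.elim (fun h => ha₀ (congrArg Prod.fst h)) fun h => h (Prod.mk_le_mk.2 ⟨?_, ?_⟩)
  · exact hle.trans (sSup_le_sSup fun S hS => ⟨(S, b), hlower hS, rfl⟩)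
  · exact le_sSup ⟨(a', b), hlower ha', rfl⟩

lemma snd_mem_reduced {x : α × β} (hx : x ∈ reduced (P ×ˢ Q)) : x.2 ∈ reduced Q :=
  fst_mem_reduced (x := x.swap) (by rwa [← prodComm_preimage_prod, reduced_preimage])

lemma minimal_or_minimal_of_mem_reduced_prod {a : α} {b : β}
    (h : (a, b) ∈ reduced (P ×ˢ Q)) : Minimal (· ∈ P) a ∨ Minimal (· ∈ Q) b := by
  obtain ⟨⟨ha, hb⟩, hr⟩ := h
  by_contra hmin
  obtain ⟨a', ha', ha'a, haa'⟩ := (not_minimal_iff ha).1 (not_or.1 hmin).1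
  obtain ⟨b', hb', hb'b, hbb'⟩ := (not_minimal_iff hb).1 (not_or.1 hmin).2
  have ha'a : a' < a := lt_of_le_not_ge ha'a haa'
  have hb'b : b' < b := lt_of_le_not_ge hb'b hbb'
  refine hr.elim (fun h => ne_bot_of_gt ha'a (congrArg Prod.fst h)) fun h => h ?_
  calc (a, b) ≤ (a', b) ⊔ (a, b') := Prod.mk_le_mk.2 ⟨le_sup_right, le_sup_left⟩
    _ ≤ sSup {y | y ∈ P ×ˢ Q ∧ y < (a, b)} :=
      sup_le (le_sSup ⟨⟨ha', hb⟩, Prod.mk_lt_mk_iff_left.2 ha'a⟩)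
        (le_sSup ⟨⟨ha, hb'⟩, Prod.mk_lt_mk_iff_right.2 hb'b⟩)

lemma IsChainDownOrUp.prod_of_minimal {a : α} {b : β} (h : IsChainDownOrUp Q b)
    (ha : Minimal (· ∈ P) a) (hb : b ∈ reduced Q) : IsChainDownOrUp (P ×ˢ Q) (a, b) := by
  have hchain {t : Set β} (ht : IsChain (· ≤ ·) t) : IsChain (· ≤ ·) ({a} ×ˢ t) := by
    rw [singleton_prod]
    exact Monotone.isChain_image (fun _ _ h => Prod.mk_le_mk.2 ⟨le_rfl, h⟩) ht
  have hdown : reduced (P ×ˢ Q) ∩ Iic (a, b) ⊆ {a} ×ˢ (reduced Q ∩ Iic b) :=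
    fun ⟨a', b'⟩ ⟨hx, ha', hb'⟩ =>
      ⟨ha.eq_of_le (reduced_subset hx).1 ha', snd_mem_reduced hx, hb'⟩
  by_cases hbmin : Minimal (· ∈ Q) b
  · rw [reduced_inter_Iic_of_minimal hbmin] at hdown
    exact Or.inl ((hchain subsingleton_singleton.isChain).mono hdown)
  refine h.imp (fun hc => (hchain hc).mono hdown) fun hc => (hchain hc).mono ?_
  rintro ⟨a', b'⟩ ⟨hx, ha', hb'⟩
  rcases minimal_or_minimal_of_mem_reduced_prod hx with ha'min | hb'min
  · exact ⟨(ha'min.eq_of_le ha.1 ha').symm, snd_mem_reduced hx, hb'⟩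
  · exact absurd (by rwa [hb'min.eq_of_le hb.1 hb']) hbmin

lemma isChainDownOrUp_prod (hP : ∀ a ∈ reduced P, IsChainDownOrUp P a)
    (hQ : ∀ b ∈ reduced Q, IsChainDownOrUp Q b) :
    ∀ x ∈ reduced (P ×ˢ Q), IsChainDownOrUp (P ×ˢ Q) x := by
  rintro ⟨a, b⟩ hx
  rcases minimal_or_minimal_of_mem_reduced_prod hx with ha | hb
  · exact (hQ b (snd_mem_reduced hx)).prod_of_minimal ha (snd_mem_reduced hx)
  · rw [← prodComm_preimage_prod]
    exact ((hP a (fst_mem_reduced hx)).prod_of_minimal hb (fst_mem_reduced hx)).preimage _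

end Prod

section TypeFunctions

variable {m n : ℕ}

lemma reducedPoset_eq (f : Str n → Bool) : reducedPoset f = reduced (structPoset f) := by
  ext T
  simp [reducedPoset, reduced, labels, sdiff_eq_empty, sSup_eq_sUnion]

lemma downSet_eq (f : Str n → Bool) (S : Set (Fin n)) :
    downSet f S = reduced (structPoset f) ∩ Iic S := by
  rw [downSet, reducedPoset_eq]
  rfl

lemma upSet_eq (f : Str n → Bool) (S : Set (Fin n)) :
    upSet f S = reduced (structPoset f) ∩ Ici S := by
  rw [upSet, reducedPoset_eq]
  rfl

lemma structPoset_star_sdiff (f : Str n → Bool) :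
    structPoset (star f) \ {⊥, ⊤} = structPoset f \ {⊥, ⊤} := by
  ext T
  simp only [mem_sdiff, mem_insert_iff, mem_singleton_iff, not_or, bot_eq_empty, top_eq_univ,
    and_congr_left_iff]
  rintro ⟨h₀, h₁⟩
  simp [structPoset, mobius_star f (nonempty_iff_ne_empty.2 h₀) h₁]

lemma structPoset_permComp (f : Str n → Bool) (σ : Equiv.Perm (Fin n)) :
    structPoset (permComp f σ) = σ.toOrderIsoSet ⁻¹' structPoset f := by
  ext T
  simp [structPoset, mobius_permComp]

lemma structPoset_tensor (f : Str m → Bool) (g : Str n → Bool) :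
    structPoset (tensor f g) = (finSumFinEquiv.symm.toOrderIsoSet.trans sumEquiv) ⁻¹'
      (structPoset f ×ˢ structPoset g) := by
  ext T
  simp [structPoset, mobius_tensor, Equiv.image_eq_preimage_symm, preimage_preimage]

lemma isChain_set_of_subsingleton {ι : Type*} [Subsingleton ι] (s : Set (Set ι)) :
    IsChain (· ≤ ·) s := by
  intro X _ Y _ _
  by_cases h : X ⊆ Y
  · exact Or.inl h
  · obtain ⟨x, hx, -⟩ := not_subset.1 h
    exact Or.inr fun y _ => Subsingleton.elim y x ▸ hx

theorem isChainDownOrUp_structPoset {f : Str n → Bool} (hf : IsType n f) :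
    ∀ S ∈ reduced (structPoset f), IsChainDownOrUp (structPoset f) S := by
  induction hf with
  | one => exact fun S _ => Or.inl (isChain_set_of_subsingleton _)
  | dual _ ih => exact isChainDownOrUp_of_sdiff_bot_top (structPoset_star_sdiff _).symm ih
  | perm σ _ ih =>
    rw [structPoset_permComp, reduced_preimage]
    exact fun S hS => (ih _ hS).preimage _
  | tens _ _ ihf ihg =>
    rw [structPoset_tensor, reduced_preimage]
    exact fun S hS => (isChainDownOrUp_prod ihf ihg _ hS).preimage _

end TypeFunctions

/-- for `S ∈ 𝓟_f^0`, at least one of `S^↓`, `S^↑` is a chain; if `S^↓` is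
a chain, then `ρ_f(S)` equals its length `|S^↓| − 1`. -/
theorem stmt17 {n : ℕ} (f : Str n → Bool) (hf : IsType n f)
    (S : Set (Fin n)) (hS : S ∈ reducedPoset f) :
    (IsChain (· ⊆ ·) (downSet f S) ∨ IsChain (· ⊆ ·) (upSet f S)) ∧
    (IsChain (· ⊆ ·) (downSet f S) → rank f S = (downSet f S).ncard - 1) := by
  rw [reducedPoset_eq] at hS
  rw [downSet_eq, upSet_eq]
  exact ⟨isChainDownOrUp_structPoset hf S hS, heightIn_eq_ncard_sub_one hS.1⟩

end HOT
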